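/- The tangent bundle monad on a cartesian differential category is commutative: μ_{X×Y} ∘ T(t_{X,Y}) ∘ t'_{X,TY} = μ_{X×Y} ∘ T(t'_{X,Y}) ∘ t_{TX,Y} : TX×TY → T(X×Y). -/
import Mathlib


open CategoryTheory

universe v u

/-- Hom-sets carry a commutative additive monoid structure. -/
class HomAdd (C : Type u) [Category.{v} C] where
  homMonoid : ∀ X Y : C, AddCommMonoid (X ⟶ Y)

attribute [instance] HomAdd.homMonoid

/-- A morphism is additive if it preserves the additive structure under
precomposition. -/
def IsAdditive {C : Type u} [Category.{v} C] [HomAdd C] {X Y : C} (f : X ⟶ Y) : Prop :=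
  (∀ {W : C} (g h : W ⟶ X), (g + h) ≫ f = g ≫ f + h ≫ f) ∧
  (∀ {W : C}, (0 : W ⟶ X) ≫ f = 0)

/-- A cartesian left-additive category: a category with chosen finite products,
hom-sets commutative monoids, composition is left-additive (precomposition
preserves sums), projections are additive, and pairings of additive
morphisms are additive. -/
class CLAC (C : Type u) [Category.{v} C] extends HomAdd C where
  P : C → C → C
  p1 : ∀ {X Y : C}, P X Y ⟶ X
  p2 : ∀ {X Y : C}, P X Y ⟶ Y
  pair : ∀ {Z X Y : C}, (Z ⟶ X) → (Z ⟶ Y) → (Z ⟶ P X Y)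
  pair_fst : ∀ {Z X Y : C} (f : Z ⟶ X) (g : Z ⟶ Y), pair f g ≫ p1 = f
  pair_snd : ∀ {Z X Y : C} (f : Z ⟶ X) (g : Z ⟶ Y), pair f g ≫ p2 = g
  pair_ext : ∀ {Z X Y : C} (h k : Z ⟶ P X Y),
    h ≫ p1 = k ≫ p1 → h ≫ p2 = k ≫ p2 → h = k
  one : C
  bang : ∀ X : C, X ⟶ one
  bang_unique : ∀ {X : C} (f : X ⟶ one), f = bang X
  comp_add : ∀ {X Y Z : C} (f : X ⟶ Y) (g h : Y ⟶ Z),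
    f ≫ (g + h) = f ≫ g + f ≫ h
  comp_zero : ∀ {X Y Z : C} (f : X ⟶ Y), f ≫ (0 : Y ⟶ Z) = 0
  p1_additive : ∀ {X Y : C}, IsAdditive (p1 (X := X) (Y := Y))
  p2_additive : ∀ {X Y : C}, IsAdditive (p2 (X := X) (Y := Y))
  pair_additive : ∀ {Z X Y : C} (f : Z ⟶ X) (g : Z ⟶ Y),
    IsAdditive f → IsAdditive g → IsAdditive (pair f g)

namespace CLAC

variable {C : Type u} [Category.{v} C] [CLAC C]

/-- The product of two morphisms, `f × g = ⟨f ∘ π₁, g ∘ π₂⟩`. -/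
def prodMor {W X Y Z : C} (f : W ⟶ Y) (g : X ⟶ Z) : P W X ⟶ P Y Z :=
  pair (p1 ≫ f) (p2 ≫ g)

end CLAC

open CLAC

/-- A cartesian differential category: a cartesian left-additive category
equipped with a differential operator `D` satisfying axioms D1–D7. -/
class CDC (C : Type u) [Category.{v} C] extends CLAC C where
  D : ∀ {X Y : C}, (X ⟶ Y) → (P X X ⟶ Y)
  D1 : ∀ {X Y : C} (f g : X ⟶ Y), D (f + g) = D f + D g
  D1' : ∀ {X Y : C}, D (0 : X ⟶ Y) = 0
  D2 : ∀ {W X Y : C} (f : X ⟶ Y) (h k v : W ⟶ X),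
    pair (h + k) v ≫ D f = pair h v ≫ D f + pair k v ≫ D f
  D2' : ∀ {W X Y : C} (f : X ⟶ Y) (v : W ⟶ X), pair 0 v ≫ D f = 0
  D3 : ∀ {X : C}, D (𝟙 X) = p1
  D3₁ : ∀ {X Y : C}, D (p1 (X := X) (Y := Y)) = p1 ≫ p1
  D3₂ : ∀ {X Y : C}, D (p2 (X := X) (Y := Y)) = p1 ≫ p2
  D4 : ∀ {Z X Y : C} (f : Z ⟶ X) (g : Z ⟶ Y), D (pair f g) = pair (D f) (D g)
  D5 : ∀ {X Y Z : C} (g : X ⟶ Y) (f : Y ⟶ Z),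
    D (g ≫ f) = pair (D g) (p2 ≫ g) ≫ D f
  D6 : ∀ {W X Y : C} (f : X ⟶ Y) (g h k : W ⟶ X),
    pair (pair g 0) (pair h k) ≫ D (D f) = pair g k ≫ D f
  D7 : ∀ {W X Y : C} (f : X ⟶ Y) (g h k : W ⟶ X),
    pair (pair 0 h) (pair g k) ≫ D (D f) = pair (pair 0 g) (pair h k) ≫ D (D f)

namespace CDC

variable {C : Type u} [Category.{v} C] [CDC C]

/-- The tangent bundle functor on morphisms: `T(f) = ⟨D(f), f ∘ π₂⟩`. -/
def Tm {X Y : C} (f : X ⟶ Y) : P X X ⟶ P Y Y :=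
  pair (D f) (p2 ≫ f)

/-- The unit `η_X = ⟨0, id⟩ : X ⟶ TX`. -/
def η (X : C) : X ⟶ P X X := pair 0 (𝟙 X)

/-- The multiplication `μ_X = ⟨π₂∘π₁ + π₁∘π₂, π₂∘π₂⟩ : TTX ⟶ TX`. -/
def μ (X : C) : P (P X X) (P X X) ⟶ P X X :=
  pair (p1 ≫ p2 + p2 ≫ p1) (p2 ≫ p2)

/-- The (right) tensorial strength `t_{X,Y} = ⟨⟨0, π₁∘π₂⟩, ⟨π₁, π₂∘π₂⟩⟩`. -/
def t (X Y : C) : P X (P Y Y) ⟶ P (P X Y) (P X Y) :=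
  pair (pair 0 (p2 ≫ p1)) (pair p1 (p2 ≫ p2))

/-- The left tensorial strength `t'_{X,Y} = ⟨⟨π₁∘π₁, 0⟩, ⟨π₂∘π₁, π₂⟩⟩`. -/
def t' (X Y : C) : P (P X X) Y ⟶ P (P X Y) (P X Y) :=
  pair (pair (p1 ≫ p1) 0) (pair (p1 ≫ p2) p2)

/-- The distributivity isomorphism
`σ = ⟨⟨π₁∘π₁, π₁∘π₂⟩, ⟨π₂∘π₁, π₂∘π₂⟩⟩ : (A×B)×(E×F) ⟶ (A×E)×(B×F)`. -/
def Sig (A B E F : C) : P (P A B) (P E F) ⟶ P (P A E) (P B F) :=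
  pair (pair (p1 ≫ p1) (p2 ≫ p1)) (pair (p1 ≫ p2) (p2 ≫ p2))

/-- The symmetry `c_{X,Y} = ⟨π₂, π₁⟩`. -/
def symm (X Y : C) : P X Y ⟶ P Y X := pair p2 p1

/-- The left unitor `ℓ_X = ⟨!_X, id⟩ : X ⟶ 1 × X`. -/
def lUnit (X : C) : X ⟶ P one X := pair (bang X) (𝟙 X)

/-- The associator `a_{X,Y,Z} = ⟨π₁∘π₁, ⟨π₂∘π₁, π₂⟩⟩`. -/
def assoc (X Y Z : C) : P (P X Y) Z ⟶ P X (P Y Z) :=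
  pair (p1 ≫ p1) (pair (p1 ≫ p2) p2)

/-- The monoidal structure map `ψ_{X,Y} = ⟨π₁×π₁, π₂×π₂⟩ : TX×TY ⟶ T(X×Y)`. -/
def ψ (X Y : C) : P (P X X) (P Y Y) ⟶ P (P X Y) (P X Y) :=
  pair (prodMor p1 p1) (prodMor p2 p2)

end CDC

open CDC

variable {C : Type u} [Category.{v} C] [CDC C]

lemma comp_pair {W Z X Y : C} (f : W ⟶ Z) (g : Z ⟶ X) (h : Z ⟶ Y) :
    f ≫ pair g h = pair (f ≫ g) (f ≫ h) := by
  apply pair_ext <;> simp [Category.assoc, pair_fst, pair_snd]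

lemma add_comp_p1 {W X Y : C} (f g : W ⟶ P X Y) :
    (f + g) ≫ p1 = f ≫ p1 + g ≫ p1 := p1_additive.1 f g

lemma add_comp_p2 {W X Y : C} (f g : W ⟶ P X Y) :
    (f + g) ≫ p2 = f ≫ p2 + g ≫ p2 := p2_additive.1 f g

lemma zero_comp_p1 {W X Y : C} : (0 : W ⟶ P X Y) ≫ p1 = 0 := p1_additive.2
lemma zero_comp_p2 {W X Y : C} : (0 : W ⟶ P X Y) ≫ p2 = 0 := p2_additive.2

lemma D_comp_p1 {Z X Y : C} (f : Z ⟶ P X Y) :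
    D (f ≫ p1) = D f ≫ p1 := by
  rw [D5, D3₁, ← Category.assoc, pair_fst]

lemma D_comp_p2 {Z X Y : C} (f : Z ⟶ P X Y) :
    D (f ≫ p2) = D f ≫ p2 := by
  rw [D5, D3₂, ← Category.assoc, pair_fst]

set_option maxHeartbeats 4000000 in
/-- The tangent bundle monad is commutative:
`μ_{X×Y} ∘ T(t_{X,Y}) ∘ t'_{X,TY} = μ_{X×Y} ∘ T(t'_{X,Y}) ∘ t_{TX,Y}`. -/
theorem T_commutative (X Y : C) :
    t' X (P Y Y) ≫ Tm (t X Y) ≫ μ (P X Y) =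
      t (P X X) Y ≫ Tm (t' X Y) ≫ μ (P X Y) := by
  have hDt : D (t X Y) =
      pair (pair 0 (p1 ≫ p2 ≫ p1)) (pair (p1 ≫ p1) (p1 ≫ p2 ≫ p2)) := by
    simp [t, D4, D1', D_comp_p1, D_comp_p2, D3₁, D3₂, Category.assoc]
  have hDt' : D (t' X Y) =
      pair (pair (p1 ≫ p1 ≫ p1) 0) (pair (p1 ≫ p1 ≫ p2) (p1 ≫ p2)) := by
    simp [t', D4, D1', D_comp_p1, D_comp_p2, D3₁, D3₂, Category.assoc]
  simp only [Tm]
  rw [hDt, hDt']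
  apply pair_ext <;> apply pair_ext <;>
    simp [μ, t, t', comp_pair, pair_fst, pair_snd,
      ← Category.assoc, comp_add, comp_zero, add_comp_p1, add_comp_p2,
      zero_comp_p1, zero_comp_p2, add_comm]
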